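/- For all positive integers m, n, the function h₀(x) = √(n cos²x/(m+2n) + m sin²x/(2m+n)) satisfies the Sturm–Liouville equation −σ(x)·d/dx(σ(x)·dh₀/dx) + 2(m+n)²·h₀(x) = 2·ρ(x)·h₀(x) for all real x, i.e. h₀ is a solution of the associated periodic Sturm–Liouville problem with parameter l = m+n and eigenvalue λ = 2; moreover h₀(x) > 0 for all real x. -/

import Mathlib

/-!
With `D = (m + 2n)(2m + n)`, `a = n/(m + 2n)` and `b = m/(2m + n)` one has
`h₀² = a cos² + b sin²` and `σ² = 2D·h₀²`. Since `√u · (√u)' = u'/2`, the operator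
collapses to `σ (σ h₀')' = D (h₀²)'' h₀ = 2D(b - a) cos 2x · h₀`, and `D(b - a) = m² - n²`
turns the equation into the identity `(m + n)² - (m² - n²) cos 2x = ρ(x)`.
-/

open Real

/-- `σ(x) = √(m² + 4mn + n² − (m² − n²)cos 2x)`. -/
noncomputable def sigmaMN (m n : ℕ) (x : ℝ) : ℝ :=
  Real.sqrt ((m : ℝ) ^ 2 + 4 * m * n + n ^ 2 - ((m : ℝ) ^ 2 - n ^ 2) * Real.cos (2 * x))

/-- `ρ(x) = (m+n)(m+n − (m−n)cos 2x)`. -/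
noncomputable def rhoMN (m n : ℕ) (x : ℝ) : ℝ :=
  ((m : ℝ) + n) * ((m : ℝ) + n - ((m : ℝ) - n) * Real.cos (2 * x))

theorem sqrt_mul_deriv_sqrt_of_hasDerivAt {u : ℝ → ℝ} {u' t : ℝ} (hu : HasDerivAt u u' t)
    (ht : 0 < u t) : √(u t) * deriv (fun s => √(u s)) t = u' / 2 := by
  rw [(hu.sqrt ht.ne').deriv]
  field_simp [(sqrt_pos.2 ht).ne']

theorem sqrt_const_mul_mul_deriv_sqrt_const_mul_mul_deriv_sqrt {u u' : ℝ → ℝ} {u'' c x : ℝ}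
    (hu : ∀ t, HasDerivAt u (u' t) t) (hu' : HasDerivAt u' u'' x) (hpos : ∀ t, 0 < u t)
    (hc : 0 ≤ c) :
    √(c * u x) * deriv (fun t => √(c * u t) * deriv (fun s => √(u s)) t) x =
      c * u'' / 2 * √(u x) := by
  have hinner :
      (fun t => √(c * u t) * deriv (fun s => √(u s)) t) = fun t => √c * (u' t / 2) := by
    funext t
    rw [sqrt_mul hc, mul_assoc, sqrt_mul_deriv_sqrt_of_hasDerivAt (hu t) (hpos t)]
  rw [hinner, ((hu'.div_const 2).const_mul √c).deriv, sqrt_mul hc]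
  linear_combination u'' / 2 * √(u x) * mul_self_sqrt hc

theorem mul_cos_sq_add_mul_sin_sq_pos {a b : ℝ} (ha : 0 < a) (hb : 0 < b) (t : ℝ) :
    0 < a * cos t ^ 2 + b * sin t ^ 2 := by
  nlinarith [min_le_left a b, min_le_right a b, lt_min ha hb, sq_nonneg (cos t),
    sq_nonneg (sin t), sin_sq_add_cos_sq t]

theorem hasDerivAt_mul_cos_sq_add_mul_sin_sq (a b t : ℝ) :
    HasDerivAt (fun t => a * cos t ^ 2 + b * sin t ^ 2) ((b - a) * sin (2 * t)) t := by
  have hcos := ((hasDerivAt_cos t).fun_pow 2).const_mul a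
  have hsin := ((hasDerivAt_sin t).fun_pow 2).const_mul b
  refine (hcos.add hsin).congr_deriv ?_
  rw [sin_two_mul]
  ring

theorem hasDerivAt_mul_sin_two_mul (c t : ℝ) :
    HasDerivAt (fun t => c * sin (2 * t)) (2 * c * cos (2 * t)) t := by
  refine ((((hasDerivAt_id t).const_mul 2).sin).const_mul c).congr_deriv ?_
  simp only [id, mul_one]
  ring

theorem sigmaMN_eq_sqrt (m n : ℕ) (t : ℝ) :
    sigmaMN m n t = √(2 * ((m + 2 * n) * (2 * m + n)) *
      (n / (m + 2 * n) * cos t ^ 2 + m / (2 * m + n) * sin t ^ 2)) := by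
  rw [sigmaMN]
  congr 1
  rcases Nat.eq_zero_or_pos (m + n) with h | h
  · obtain ⟨rfl, rfl⟩ : m = 0 ∧ n = 0 := by omega
    simp
  · have hmn : (0 : ℝ) < m + n := by exact_mod_cast h
    have h₁ : (m : ℝ) + 2 * n ≠ 0 := by linarith [n.cast_nonneg (α := ℝ)]
    have h₂ : 2 * (m : ℝ) + n ≠ 0 := by linarith [m.cast_nonneg (α := ℝ)]
    rw [cos_two_mul, sin_sq]
    linear_combination (-2 * (2 * m + n) * cos t ^ 2 : ℝ) * div_mul_cancel₀ (n : ℝ) h₁ +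
      (-2 * (m + 2 * n) * (1 - cos t ^ 2) : ℝ) * div_mul_cancel₀ (m : ℝ) h₂

/-- `h₀(x) = √(n cos²x/(m+2n) + m sin²x/(2m+n))` solves the associated periodic
Sturm–Liouville problem `−σ(x)·d/dx(σ(x)·dh/dx) + 2l²·h = λ·ρ(x)·h` with parameter
`l = m + n` and eigenvalue `λ = 2`; moreover `h₀(x) > 0` for all real `x`. -/
theorem h0_solves_sturm_liouville (m n : ℕ) (hm : 0 < m) (hn : 0 < n)
    (h₀ : ℝ → ℝ)
    (hh₀ : ∀ t : ℝ, h₀ t = Real.sqrt ((n : ℝ) * Real.cos t ^ 2 / (m + 2 * n) +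
      (m : ℝ) * Real.sin t ^ 2 / (2 * m + n))) (x : ℝ) :
    (-(sigmaMN m n x * deriv (fun t : ℝ => sigmaMN m n t * deriv h₀ t) x) +
        2 * ((m : ℝ) + n) ^ 2 * h₀ x = 2 * rhoMN m n x * h₀ x) ∧ 0 < h₀ x := by
  have hm' : (0 : ℝ) < m := by exact_mod_cast hm
  have hn' : (0 : ℝ) < n := by exact_mod_cast hn
  set a : ℝ := n / (m + 2 * n)
  set b : ℝ := m / (2 * m + n)
  set u : ℝ → ℝ := fun t => a * cos t ^ 2 + b * sin t ^ 2
  have hu : ∀ t, 0 < u t :=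
    mul_cos_sq_add_mul_sin_sq_pos (div_pos hn' (by linarith)) (div_pos hm' (by linarith))
  have hh : h₀ = fun t => √(u t) := funext fun t => by rw [hh₀]; congr 1; ring
  refine ⟨?_, hh ▸ sqrt_pos.2 (hu x)⟩
  have hσ : sigmaMN m n = fun t => √(2 * ((m + 2 * n) * (2 * m + n)) * u t) :=
    funext (sigmaMN_eq_sqrt m n)
  have hab : ((m + 2 * n) * (2 * m + n)) * (b - a) = (m : ℝ) ^ 2 - n ^ 2 := by
    simp only [a, b]
    field_simp
    ring
  simp only [hσ, hh]
  rw [sqrt_const_mul_mul_deriv_sqrt_const_mul_mul_deriv_sqrt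
    (hasDerivAt_mul_cos_sq_add_mul_sin_sq a b) (hasDerivAt_mul_sin_two_mul (b - a) x) hu
    (by positivity), rhoMN]
  linear_combination (-2 * cos (2 * x) * √(u x)) * hab
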